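/- Let u : ℝⁿ → ℝᵐ be of class C² and W : ℝᵐ → ℝ of class C¹, and let T(u) be the associated stress tensor. Then for each j = 1, …, n, the j-th component of the divergence of T satisfies Σᵢ ∂T_{ij}(u)/∂xᵢ = (∂u/∂xⱼ) · (Δu − ∇W(u)). In particular, if u solves Δu − ∇W(u) = 0, then T(u) is divergence-free. -/

import Mathlib

/-!
Differentiate `T_{ij}` along `e_i` and sum over `i`. The product rule turns the first term into
`⟪Δu, u_{,j}⟫ + Σ_i ⟪u_{,i}, ∂_i ∂_j u⟫`, while the diagonal term contributes
`-∂_j(½|∇u|² + W(u)) = -Σ_k ⟪u_{,k}, ∂_j ∂_k u⟫ - ⟪∇W(u), u_{,j}⟫`.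
Since `u` is `C²`, `∂_i ∂_j u = ∂_j ∂_i u`, so the two mixed sums cancel.
-/

open MeasureTheory Filter Metric Real RealInnerProductSpace

noncomputable section

/-- The `i`-th partial derivative of `u : ℝⁿ → ℝᵐ`. -/
def pder {n m : ℕ} (i : Fin n) (u : EuclideanSpace ℝ (Fin n) → EuclideanSpace ℝ (Fin m))
    (x : EuclideanSpace ℝ (Fin n)) : EuclideanSpace ℝ (Fin m) :=
  fderiv ℝ u x (EuclideanSpace.single i 1)

/-- The Laplacian of `u : ℝⁿ → ℝᵐ`. -/
def vlap {n m : ℕ} (u : EuclideanSpace ℝ (Fin n) → EuclideanSpace ℝ (Fin m))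
    (x : EuclideanSpace ℝ (Fin n)) : EuclideanSpace ℝ (Fin m) :=
  ∑ i, pder i (fun y => pder i u y) x

/-- The squared Frobenius norm `|∇u(x)|²` of the Jacobian of `u`. -/
def gradNormSq {n m : ℕ} (u : EuclideanSpace ℝ (Fin n) → EuclideanSpace ℝ (Fin m))
    (x : EuclideanSpace ℝ (Fin n)) : ℝ :=
  ∑ i, ‖pder i u x‖ ^ 2

/-- The stress tensor associated to `u` and the potential `W`:
`T_{ij}(u)(x) = u_{,i}·u_{,j} − δ_{ij} (½|∇u(x)|² + W(u(x)))`. -/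
def stress {n m : ℕ} (W : EuclideanSpace ℝ (Fin m) → ℝ)
    (u : EuclideanSpace ℝ (Fin n) → EuclideanSpace ℝ (Fin m))
    (x : EuclideanSpace ℝ (Fin n)) (i j : Fin n) : ℝ :=
  ⟪pder i u x, pder j u x⟫ -
    (if i = j then (1 : ℝ) else 0) * ((1 / 2) * gradNormSq u x + W (u x))

section

variable {n m : ℕ} {u : EuclideanSpace ℝ (Fin n) → EuclideanSpace ℝ (Fin m)}
  {W : EuclideanSpace ℝ (Fin m) → ℝ}

lemma fderiv_apply_single (u : EuclideanSpace ℝ (Fin n) → EuclideanSpace ℝ (Fin m))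
    (x : EuclideanSpace ℝ (Fin n)) (i : Fin n) :
    fderiv ℝ u x (EuclideanSpace.single i 1) = pder i u x :=
  rfl

lemma hasFDerivAt_pder (hu : ContDiff ℝ 2 u) (i : Fin n) (x : EuclideanSpace ℝ (Fin n)) :
    HasFDerivAt (pder i u) ((fderiv ℝ (fderiv ℝ u) x).flip (EuclideanSpace.single i 1)) x :=
  ((hu.fderiv_right (m := 1) (by norm_num)).differentiable (by norm_num) x).hasFDerivAt.clm_apply
    (hasFDerivAt_const _ _) |>.congr_fderiv (by ext; simp)

lemma differentiable_pder (hu : ContDiff ℝ 2 u) (i : Fin n) : Differentiable ℝ (pder i u) :=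
  fun x => (hasFDerivAt_pder hu i x).differentiableAt

lemma pder_pder_comm (hu : ContDiff ℝ 2 u) (i j : Fin n) (x : EuclideanSpace ℝ (Fin n)) :
    pder i (pder j u) x = pder j (pder i u) x := by
  simp only [pder, (hasFDerivAt_pder hu _ x).fderiv, ContinuousLinearMap.flip_apply]
  exact hu.contDiffAt.isSymmSndFDerivAt (by norm_num) _ _

lemma vlap_eq (u : EuclideanSpace ℝ (Fin n) → EuclideanSpace ℝ (Fin m))
    (x : EuclideanSpace ℝ (Fin n)) : vlap u x = ∑ i, pder i (pder i u) x :=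
  rfl

lemma gradNormSq_eq_sum_inner (u : EuclideanSpace ℝ (Fin n) → EuclideanSpace ℝ (Fin m)) :
    gradNormSq u = ∑ k, fun x => ⟪pder k u x, pder k u x⟫ := by
  ext x
  simp [gradNormSq]

lemma fderiv_gradNormSq_apply (hu : ContDiff ℝ 2 u) (x v : EuclideanSpace ℝ (Fin n)) :
    fderiv ℝ (gradNormSq u) x v = 2 * ∑ k, ⟪pder k u x, fderiv ℝ (pder k u) x v⟫ := by
  have hd k := differentiable_pder hu k x
  rw [gradNormSq_eq_sum_inner, fderiv_sum (fun k _ => (hd k).inner ℝ (hd k)),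
    FunLike.coe_sum, Finset.sum_apply, Finset.mul_sum]
  refine Finset.sum_congr rfl fun k _ => ?_
  rw [fderiv_inner_apply ℝ (hd k) (hd k), real_inner_comm (fderiv ℝ _ x v)]
  ring

lemma differentiable_gradNormSq (hu : ContDiff ℝ 2 u) : Differentiable ℝ (gradNormSq u) := by
  rw [gradNormSq_eq_sum_inner]
  exact Differentiable.sum fun k _ => (differentiable_pder hu k).inner ℝ (differentiable_pder hu k)

def energyDensity (W : EuclideanSpace ℝ (Fin m) → ℝ)
    (u : EuclideanSpace ℝ (Fin n) → EuclideanSpace ℝ (Fin m)) (x : EuclideanSpace ℝ (Fin n)) :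
    ℝ :=
  1 / 2 * gradNormSq u x + W (u x)

lemma differentiable_energyDensity (hu : ContDiff ℝ 2 u) (hW : Differentiable ℝ W) :
    Differentiable ℝ (energyDensity W u) :=
  ((differentiable_gradNormSq hu).const_mul _).add (hW.comp (hu.differentiable (by norm_num)))

lemma fderiv_energyDensity_apply (hu : ContDiff ℝ 2 u) (hW : Differentiable ℝ W)
    (x v : EuclideanSpace ℝ (Fin n)) :
    fderiv ℝ (energyDensity W u) x v =
      ∑ k, ⟪pder k u x, fderiv ℝ (pder k u) x v⟫ + ⟪gradient W (u x), fderiv ℝ u x v⟫ := by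
  have hud := hu.differentiable (by norm_num) x
  have hgrad := differentiable_gradNormSq hu x
  change fderiv ℝ (fun y => 1 / 2 * gradNormSq u y + W (u y)) x v = _
  rw [fderiv_fun_add (hgrad.const_mul _) (DifferentiableAt.fun_comp' x (hW (u x)) hud),
    add_apply, fderiv_const_mul hgrad, smul_apply, smul_eq_mul,
    fderiv_gradNormSq_apply hu, fderiv_fun_comp x (hW _) hud, ContinuousLinearMap.comp_apply,
    inner_gradient_left]
  ring

lemma fderiv_stress_apply (hu : ContDiff ℝ 2 u) (hW : Differentiable ℝ W)
    (x v : EuclideanSpace ℝ (Fin n)) (i j : Fin n) :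
    fderiv ℝ (fun y => stress W u y i j) x v =
      ⟪pder i u x, fderiv ℝ (pder j u) x v⟫ + ⟪fderiv ℝ (pder i u) x v, pder j u x⟫ -
        (if i = j then 1 else 0) * fderiv ℝ (energyDensity W u) x v := by
  have hd k := differentiable_pder hu k x
  change fderiv ℝ (fun y => ⟪pder i u y, pder j u y⟫ -
    (if i = j then (1 : ℝ) else 0) * energyDensity W u y) x v = _
  rw [fderiv_fun_sub ((hd i).inner ℝ (hd j))
      ((differentiable_energyDensity hu hW x).const_mul _),
    fderiv_const_mul (differentiable_energyDensity hu hW x), sub_apply,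
    fderiv_inner_apply ℝ (hd i) (hd j), smul_apply, smul_eq_mul]

theorem sum_fderiv_stress_apply_single (hu : ContDiff ℝ 2 u) (hW : Differentiable ℝ W)
    (x : EuclideanSpace ℝ (Fin n)) (j : Fin n) :
    ∑ i, fderiv ℝ (fun y => stress W u y i j) x (EuclideanSpace.single i 1) =
      ⟪pder j u x, vlap u x - gradient W (u x)⟫ := by
  simp only [fderiv_stress_apply hu hW, Finset.sum_sub_distrib, Finset.sum_add_distrib, boole_mul,
    Finset.sum_ite_eq', Finset.mem_univ, if_true, fderiv_energyDensity_apply hu hW,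
    fderiv_apply_single, pder_pder_comm hu _ j]
  rw [vlap_eq, inner_sub_right, real_inner_comm _ (pder j u x), sum_inner, real_inner_comm]
  ring

end

/-- The j-th component of the divergence of the stress tensor equals
`u_{,j} · (Δu − ∇W(u))`; in particular for solutions of the Allen–Cahn system the
stress tensor is divergence-free. -/
theorem stress_div_eq (n m : ℕ)
    (u : EuclideanSpace ℝ (Fin n) → EuclideanSpace ℝ (Fin m))
    (W : EuclideanSpace ℝ (Fin m) → ℝ)
    (hu : ContDiff ℝ 2 u) (hW : ContDiff ℝ 1 W) :
    (∀ (x : EuclideanSpace ℝ (Fin n)) (j : Fin n),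
      ∑ i, fderiv ℝ (fun y => stress W u y i j) x (EuclideanSpace.single i 1) =
        ⟪pder j u x, vlap u x - gradient W (u x)⟫) ∧
    ((∀ x, vlap u x - gradient W (u x) = 0) →
      ∀ (x : EuclideanSpace ℝ (Fin n)) (j : Fin n),
        ∑ i, fderiv ℝ (fun y => stress W u y i j) x (EuclideanSpace.single i 1) = 0) := by
  have hdiv := sum_fderiv_stress_apply_single hu (hW.differentiable one_ne_zero)
  refine ⟨hdiv, fun hsol x j => ?_⟩
  rw [hdiv, hsol, inner_zero_right]
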